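/- Let G be a graph of order p with at least one edge and let m ≥ 1. Then the m-duplicate graph Dᵐ(G) and the 2ᵐ-shadow graph D_{2ᵐ}(G) both have 2ᵐp vertices, have equal energies (namely 2ᵐ·ε(G)), and are non-cospectral. -/

import Mathlib

open Matrix SimpleGraph Finset

variable {V W : Type*}

/-- The adjacency matrix of a simple graph over ℝ is Hermitian. -/
lemma adjMatrix_isHermitian [Fintype V] [DecidableEq V] (G : SimpleGraph V)
    [DecidableRel G.Adj] : (G.adjMatrix ℝ).IsHermitian := by
  rw [Matrix.IsHermitian, Matrix.conjTranspose_eq_transpose_of_trivial]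
  exact G.isSymm_adjMatrix

/-- The energy of a finite simple graph: the sum of the absolute values of the
eigenvalues of its real adjacency matrix. -/
noncomputable def graphEnergy [Fintype V] [DecidableEq V] (G : SimpleGraph V) : ℝ := by
  classical
  exact ∑ i, |(adjMatrix_isHermitian G).eigenvalues i|

/-- The spectrum of a finite simple graph: the multiset of eigenvalues (with
multiplicity) of its real adjacency matrix. -/
noncomputable def graphSpectrum [Fintype V] [DecidableEq V] (G : SimpleGraph V) : Multiset ℝ := by
  classical
  exact Finset.univ.val.map (adjMatrix_isHermitian G).eigenvalues

/-- A graph is integral if every eigenvalue of its adjacency matrix is an integer. -/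
def IsIntegralGraph [Fintype V] [DecidableEq V] (G : SimpleGraph V) : Prop :=
  ∀ x ∈ graphSpectrum G, ∃ k : ℤ, x = (k : ℝ)

/-- The m-shadow graph of `G`, on vertex set `Fin m × V`: `(i,u)` and `(j,v)` are
adjacent iff `u` and `v` are adjacent in `G`. -/
def shadowGraph (m : ℕ) (G : SimpleGraph V) : SimpleGraph (Fin m × V) where
  Adj x y := G.Adj x.2 y.2
  symm := ⟨fun _ _ h => h.symm⟩
  loopless := ⟨fun _ h => G.irrefl h⟩

/-- The duplicate graph of `G`, on vertex set `V ⊕ V`: `inl a` is adjacent to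
`inr b` iff `a` and `b` are adjacent in `G`; no other adjacencies. -/
def duplicateGraph (G : SimpleGraph V) : SimpleGraph (V ⊕ V) where
  Adj x y :=
    match x, y with
    | Sum.inl a, Sum.inr b => G.Adj a b
    | Sum.inr a, Sum.inl b => G.Adj a b
    | _, _ => False
  symm := ⟨by rintro (a | a) (b | b) h <;> first | exact h.symm | exact h.elim⟩
  loopless := ⟨by rintro (a | a) h <;> exact h⟩

/-- The Kronecker (tensor) product of two simple graphs. -/
def tensorGraph (G : SimpleGraph V) (H : SimpleGraph W) : SimpleGraph (V × W) where
  Adj x y := G.Adj x.1 y.1 ∧ H.Adj x.2 y.2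
  symm := ⟨fun _ _ h => ⟨h.1.symm, h.2.symm⟩⟩
  loopless := ⟨fun _ h => G.irrefl h.1⟩

/-- The m-splitting graph of `G`, on vertex set `V ⊕ (Fin m × V)`: original
vertices keep their adjacencies, an original vertex `u` is adjacent to a copy
`(i,v)` iff `u` is adjacent to `v` in `G`, and copies are pairwise non-adjacent. -/
def splittingGraph (m : ℕ) (G : SimpleGraph V) : SimpleGraph (V ⊕ (Fin m × V)) where
  Adj x y :=
    match x, y with
    | Sum.inl u, Sum.inl v => G.Adj u v
    | Sum.inl u, Sum.inr iv => G.Adj u iv.2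
    | Sum.inr iu, Sum.inl v => G.Adj iu.2 v
    | Sum.inr _, Sum.inr _ => False
  symm := ⟨by rintro (u | iu) (v | iv) h <;> first | exact h.symm | exact h.elim⟩
  loopless := ⟨by rintro (u | iu) h <;> first | exact G.irrefl h | exact h⟩

/-- The join of two simple graphs: their disjoint union together with all edges
between the two parts. -/
def joinGraph (G : SimpleGraph V) (H : SimpleGraph W) : SimpleGraph (V ⊕ W) where
  Adj x y :=
    match x, y with
    | Sum.inl a, Sum.inl b => G.Adj a b
    | Sum.inr a, Sum.inr b => H.Adj a b
    | _, _ => True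
  symm := ⟨by rintro (a | a) (b | b) h <;> first | exact h.symm | trivial⟩
  loopless := ⟨by rintro (a | a) h <;> first | exact G.irrefl h | exact H.irrefl h⟩

/-- The superpath graph on a sequence of part sizes: independent sets `W i` of
size `a i`, where vertices in parts `i` and `j` are adjacent iff `|i - j| = 1`. -/
def superpathGraph {t : ℕ} (a : Fin t → ℕ) : SimpleGraph (Σ i : Fin t, Fin (a i)) where
  Adj x y := (x.1 : ℕ) + 1 = (y.1 : ℕ) ∨ (y.1 : ℕ) + 1 = (x.1 : ℕ)
  symm := ⟨fun _ _ h => h.symm⟩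
  loopless := ⟨fun x (h : (x.1 : ℕ) + 1 = (x.1 : ℕ) ∨ (x.1 : ℕ) + 1 = (x.1 : ℕ)) => by omega⟩

/-- The vertex type of the m-fold duplicate graph. -/
def iterDupVertex (V : Type*) (m : ℕ) : Type _ :=
  Nat.rec V (fun _ T => T ⊕ T) m

instance instFintypeIterDupVertex {V : Type*} [Fintype V] : ∀ m, Fintype (iterDupVertex V m)
  | 0 => inferInstanceAs (Fintype V)
  | m + 1 =>
    letI := instFintypeIterDupVertex (V := V) m
    inferInstanceAs (Fintype (iterDupVertex V m ⊕ iterDupVertex V m))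

instance instDecidableEqIterDupVertex {V : Type*} [DecidableEq V] :
    ∀ m, DecidableEq (iterDupVertex V m)
  | 0 => inferInstanceAs (DecidableEq V)
  | m + 1 =>
    letI := instDecidableEqIterDupVertex (V := V) m
    inferInstanceAs (DecidableEq (iterDupVertex V m ⊕ iterDupVertex V m))

/-- The m-duplicate graph: `D⁰(G) = G` and `Dᵐ⁺¹(G) = D(Dᵐ(G))`. -/
def iterDup (G : SimpleGraph V) : ∀ m, SimpleGraph (iterDupVertex V m)
  | 0 => G
  | m + 1 => duplicateGraph (iterDup G m)

/-!
Conjugating by the block unitriangular matrix `[[1, 0], [-1, 1]]` shows that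
`χ([[B, C], [C, B]]) = χ(B + C) · χ(B - C)`. The duplicate graph has adjacency matrix
`[[0, A], [A, 0]]`, so `spec D(H) = spec H + (-spec H)`; the shadow graph `D_{2k}(G)` has, after
splitting `Fin (k + k)`, adjacency matrix `[[A, A], [A, A]]` with `A` that of `D_k(G)`, so its
spectrum is `2 · spec D_k(G)` plus zeros. Hence summing an even function over `spec Dᵐ(G)` gives
`2ᵐ` times its sum over `spec G`, while summing a function vanishing at `0` over `spec D_{2ᵐ}(G)`
is summing it over `2ᵐ · spec G`. Taking `|x|` gives both energies; taking `x²` gives `2ᵐ T` and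
`4ᵐ T` with `T > 0` as soon as `G` has an edge, so the spectra differ.
-/

namespace Matrix

open Polynomial

variable {n : Type*} [Fintype n] [DecidableEq n]

theorem charpoly_fromBlocks_self_swap {R : Type*} [CommRing R] (B C : Matrix n n R) :
    (fromBlocks B C C B).charpoly = (B + C).charpoly * (B - C).charpoly := by
  set L : Matrix (n ⊕ n) (n ⊕ n) R := fromBlocks 1 0 (-1) 1
  set P : Matrix (n ⊕ n) (n ⊕ n) R := fromBlocks 1 0 1 1
  have hPL : P * L = 1 := by
    simp [P, L, fromBlocks_multiply, ← fromBlocks_one]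
  have htri : L * fromBlocks B C C B * P = fromBlocks (B + C) C 0 (B - C) := by
    simp only [L, P, fromBlocks_multiply]
    congr 1 <;> simp; abel
  rw [← charpoly_fromBlocks_zero₂₁, ← htri, mul_assoc, charpoly_mul_comm, mul_assoc, hPL,
    mul_one]

theorem IsHermitian.charpoly_smul {A : Matrix n n ℝ} (hA : A.IsHermitian) (c : ℝ) :
    (c • A).charpoly = ∏ i, (X - C (c * hA.eigenvalues i)) := by
  conv_lhs => rw [hA.spectral_theorem, ← map_smul, Unitary.conjStarAlgAut_apply,
    charpoly_mul_comm, ← mul_assoc]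
  simp only [Unitary.coe_star_mul_self, one_mul, ← diagonal_smul, charpoly_diagonal]
  rfl

theorem IsHermitian.roots_charpoly_smul {A : Matrix n n ℝ} (hA : A.IsHermitian) (c : ℝ) :
    (c • A).charpoly.roots = A.charpoly.roots.map (c * ·) := by
  rw [hA.charpoly_smul, hA.roots_charpoly_eq_eigenvalues, roots_prod _ _
    (Finset.prod_ne_zero_iff.mpr fun i _ => X_sub_C_ne_zero _)]
  simp only [Function.comp_apply, roots_X_sub_C, Multiset.bind_singleton, Multiset.map_map]
  rfl

theorem IsHermitian.sum_sq_eigenvalues_pos {𝕜 : Type*} [RCLike 𝕜] {A : Matrix n n 𝕜}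
    (hA : A.IsHermitian) (h : A ≠ 0) : 0 < ∑ i, hA.eigenvalues i ^ 2 := by
  obtain ⟨i, hi⟩ := Function.ne_iff.mp (hA.eigenvalues_eq_zero_iff.not.mpr h)
  exact Finset.sum_pos' (fun _ _ => sq_nonneg _) ⟨i, Finset.mem_univ i, pow_two_pos_of_ne_zero hi⟩

end Matrix

theorem adjMatrix_duplicateGraph (H : SimpleGraph W) [DecidableRel H.Adj]
    [DecidableRel (duplicateGraph H).Adj] :
    (duplicateGraph H).adjMatrix ℝ = fromBlocks 0 (H.adjMatrix ℝ) (H.adjMatrix ℝ) 0 := by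
  ext (a | a) (b | b) <;> rw [adjMatrix_apply] <;> simp [duplicateGraph] <;> congr

section Spectrum

variable [Fintype W] [DecidableEq W]

theorem graphSpectrum_eq_roots_charpoly (H : SimpleGraph W) [DecidableRel H.Adj] :
    graphSpectrum H = (H.adjMatrix ℝ).charpoly.roots := by
  rw [(adjMatrix_isHermitian H).roots_charpoly_eq_eigenvalues, RCLike.ofReal_real_eq_id,
    Function.id_comp, graphSpectrum]
  congr!

theorem graphEnergy_eq_sum_abs (H : SimpleGraph W) :
    graphEnergy H = ((graphSpectrum H).map (|·|)).sum := by
  rw [graphEnergy, graphSpectrum, Multiset.map_map]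
  rfl

theorem graphSpectrum_congr [Fintype V] [DecidableEq V] {G : SimpleGraph V}
    {H : SimpleGraph W} (e : G ≃g H) : graphSpectrum G = graphSpectrum H := by
  classical
  rw [graphSpectrum_eq_roots_charpoly, graphSpectrum_eq_roots_charpoly,
    ← charpoly_reindex e.toEquiv]
  congr 2
  ext i j
  simp only [reindex_apply, submatrix_apply, adjMatrix_apply]
  exact if_congr e.symm.map_adj_iff rfl rfl

theorem sum_sq_graphSpectrum_pos (H : SimpleGraph W) (h : ∃ u v, H.Adj u v) :
    0 < ((graphSpectrum H).map (· ^ 2)).sum := by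
  obtain ⟨u, v, huv⟩ := h
  rw [graphSpectrum, Multiset.map_map]
  refine IsHermitian.sum_sq_eigenvalues_pos _ fun h0 => ?_
  simpa [huv] using congrFun (congrFun h0 u) v

theorem graphSpectrum_duplicateGraph (H : SimpleGraph W) :
    graphSpectrum (duplicateGraph H) = graphSpectrum H + (graphSpectrum H).map Neg.neg := by
  classical
  rw [graphSpectrum_eq_roots_charpoly, graphSpectrum_eq_roots_charpoly, adjMatrix_duplicateGraph,
    charpoly_fromBlocks_self_swap, zero_add, zero_sub,
    Polynomial.roots_mul ((charpoly_monic _).mul (charpoly_monic _)).ne_zero,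
    ← neg_one_smul ℝ (H.adjMatrix ℝ), (adjMatrix_isHermitian H).roots_charpoly_smul]
  simp

theorem graphSpectrum_shadowGraph_add_self (m : ℕ) (G : SimpleGraph W) :
    graphSpectrum (shadowGraph (m + m) G) = (graphSpectrum (shadowGraph m G)).map (2 * ·) +
      Multiset.replicate (Fintype.card (Fin m × W)) 0 := by
  classical
  set A := (shadowGraph m G).adjMatrix ℝ
  let e : Fin (m + m) × W ≃ (Fin m × W) ⊕ (Fin m × W) :=
    (finSumFinEquiv.symm.prodCongr (Equiv.refl W)).trans (Equiv.sumProdDistrib _ _ _)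
  have hA : reindex e e ((shadowGraph (m + m) G).adjMatrix ℝ) = fromBlocks A A A A := by
    ext (⟨i, u⟩ | ⟨i, u⟩) (⟨j, v⟩ | ⟨j, v⟩) <;> simp [A, e] <;> rfl
  rw [graphSpectrum_eq_roots_charpoly, graphSpectrum_eq_roots_charpoly, ← charpoly_reindex e, hA,
    charpoly_fromBlocks_self_swap, sub_self, charpoly_zero, ← two_smul ℝ A,
    Polynomial.roots_mul ((charpoly_monic _).mul (Polynomial.monic_X_pow _)).ne_zero,
    (adjMatrix_isHermitian _).roots_charpoly_smul, Polynomial.roots_X_pow,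
    Multiset.nsmul_singleton]

def shadowGraphOneIso (G : SimpleGraph W) : shadowGraph 1 G ≃g G :=
  ⟨Equiv.uniqueProd W (Fin 1), Iff.rfl⟩

theorem sum_map_graphSpectrum_shadowGraph_two_pow (G : SimpleGraph W) {f : ℝ → ℝ}
    (hf : f 0 = 0) (k : ℕ) :
    ((graphSpectrum (shadowGraph (2 ^ k) G)).map f).sum =
      ((graphSpectrum G).map fun x => f (2 ^ k * x)).sum := by
  induction k generalizing f with
  | zero =>
    rw [pow_zero, graphSpectrum_congr (shadowGraphOneIso G)]
    simp
  | succ k ih =>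
    rw [show 2 ^ (k + 1) = 2 ^ k + 2 ^ k by ring, graphSpectrum_shadowGraph_add_self,
      Multiset.map_add, Multiset.sum_add, Multiset.map_replicate, hf, Multiset.sum_replicate,
      smul_zero, add_zero, Multiset.map_map, ih (by simpa using hf)]
    refine congrArg Multiset.sum (Multiset.map_congr rfl fun x _ => congrArg f ?_)
    ring

theorem sum_map_graphSpectrum_iterDup (G : SimpleGraph W) {f : ℝ → ℝ}
    (hf : ∀ x, f (-x) = f x) (k : ℕ) :
    ((graphSpectrum (iterDup G k)).map f).sum = 2 ^ k * ((graphSpectrum G).map f).sum := by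
  induction k with
  | zero => exact (one_mul _).symm
  | succ k ih =>
    change ((graphSpectrum (duplicateGraph (iterDup G k))).map f).sum = _
    rw [graphSpectrum_duplicateGraph, Multiset.map_add, Multiset.sum_add, Multiset.map_map,
      show f ∘ Neg.neg = f from funext hf, ih, pow_succ]
    ring

theorem graphEnergy_iterDup (G : SimpleGraph W) (k : ℕ) :
    graphEnergy (iterDup G k) = 2 ^ k * graphEnergy G := by
  rw [graphEnergy_eq_sum_abs, graphEnergy_eq_sum_abs, sum_map_graphSpectrum_iterDup G abs_neg]

theorem graphEnergy_shadowGraph_two_pow (G : SimpleGraph W) (k : ℕ) :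
    graphEnergy (shadowGraph (2 ^ k) G) = 2 ^ k * graphEnergy G := by
  rw [graphEnergy_eq_sum_abs, graphEnergy_eq_sum_abs,
    sum_map_graphSpectrum_shadowGraph_two_pow G abs_zero]
  simp_rw [abs_mul, abs_pow, abs_two, Multiset.sum_map_mul_left]

theorem graphSpectrum_iterDup_ne_shadowGraph_two_pow (G : SimpleGraph W)
    (hG : ∃ u v, G.Adj u v) {k : ℕ} (hk : 1 ≤ k) :
    graphSpectrum (iterDup G k) ≠ graphSpectrum (shadowGraph (2 ^ k) G) := by
  intro h
  have hsq := congrArg (fun s => (s.map (· ^ 2)).sum) h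
  rw [sum_map_graphSpectrum_iterDup G (f := (· ^ 2)) neg_sq,
    sum_map_graphSpectrum_shadowGraph_two_pow G (f := (· ^ 2)) (zero_pow two_ne_zero)] at hsq
  simp_rw [mul_pow, Multiset.sum_map_mul_left] at hsq
  have h2k : (2 : ℝ) ^ k = (2 ^ k) ^ 2 := mul_right_cancel₀ (sum_sq_graphSpectrum_pos G hG).ne' hsq
  have : (1 : ℝ) < 2 ^ k := one_lt_pow₀ one_lt_two (by omega)
  nlinarith

end Spectrum

theorem card_iterDupVertex [Fintype V] (m : ℕ) :
    Fintype.card (iterDupVertex V m) = 2 ^ m * Fintype.card V := by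
  induction m with
  | zero => exact (one_mul _).symm
  | succ m ih =>
    change Fintype.card (iterDupVertex V m ⊕ iterDupVertex V m) = _
    rw [Fintype.card_sum, ih, pow_succ]
    ring

/-- If `G` is a graph of order `p` with at least one edge and `m ≥ 1`, then the
m-duplicate graph `Dᵐ(G)` and the `2^m`-shadow graph `D_{2^m}(G)` both have
`2^m * p` vertices, their energies are both equal to `2^m · ε(G)`, and they are
non-cospectral. -/
theorem iterDup_shadow_equienergetic_noncospectral [Fintype V] [DecidableEq V]
    (G : SimpleGraph V) (p m : ℕ) (hp : Fintype.card V = p)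
    (hedge : ∃ u v, G.Adj u v) (hm : 1 ≤ m) :
    Fintype.card (iterDupVertex V m) = 2 ^ m * p ∧
      Fintype.card (Fin (2 ^ m) × V) = 2 ^ m * p ∧
      graphEnergy (iterDup G m) = 2 ^ m * graphEnergy G ∧
      graphEnergy (shadowGraph (2 ^ m) G) = 2 ^ m * graphEnergy G ∧
      graphSpectrum (iterDup G m) ≠ graphSpectrum (shadowGraph (2 ^ m) G) :=
  ⟨by rw [card_iterDupVertex, hp], by simp [hp], graphEnergy_iterDup G m,
    graphEnergy_shadowGraph_two_pow G m, graphSpectrum_iterDup_ne_shadowGraph_two_pow G hedge hm⟩
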